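/- Let n ≥ 1, d = 2^n, and let ψ ∈ ℂ^d be a unit vector. Then 2d/(d+1) ≤ Σ_{a∈𝔽₂^{2n}} |⟨ψ, W_a ψ⟩|^4 ≤ d; equivalently, with α_+(ψ) := tr(P_{n,4}·(|ψ⟩⟨ψ|)^{⊗4}) = (1/d²)·Σ_a ⟨ψ, W_a ψ⟩^4, one has 2/(d(d+1)) ≤ α_+(ψ) ≤ 1/d. -/

import Mathlib

/-! The Pauli operators are unitary, so `r_a := |⟨ψ, W_a ψ⟩| ≤ 1`, and they are an orthogonal
basis of the matrices for the Hilbert–Schmidt inner product, so Parseval gives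
`Σ_a r_a² = d · ‖ψ‖⁴ = d`. The upper bound is then `r⁴ ≤ r²`. For the lower bound, `r_0 = 1` and
Cauchy–Schwarz over the other `d² - 1` labels gives `Σ_{a ≠ 0} r_a⁴ ≥ (d - 1)² / (d² - 1)`.
The trace identity is `tr(A^{⊗4} B^{⊗4}) = tr(AB)⁴`. -/

open scoped BigOperators

noncomputable section

/-- `t`-fold tensor (Kronecker) power of a matrix, acting on `(ℂ^α)^{⊗t}`. -/
def tpow {α : Type*} [Fintype α] (M : Matrix α α ℂ) (t : ℕ) :
    Matrix (Fin t → α) (Fin t → α) ℂ :=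
  Matrix.of fun x y => ∏ i, M (x i) (y i)

/-- The rank-one operator `|ψ⟩⟨ψ|`. -/
def rankOne {α : Type*} (ψ : α → ℂ) : Matrix α α ℂ :=
  Matrix.of fun i j => ψ i * (starRingEnd ℂ) (ψ j)

/-- The operator `U_σ` permuting the `t` tensor factors of `(ℂ^α)^{⊗t}`. -/
def permOp (α : Type*) [DecidableEq α] {t : ℕ} (σ : Equiv.Perm (Fin t)) :
    Matrix (Fin t → α) (Fin t → α) ℂ :=
  Matrix.of fun x y => if (fun k => x (σ k)) = y then 1 else 0

/-- The projector `P_[t]` onto the symmetric subspace `Sym_t(ℂ^α)`. -/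
def symProj (α : Type*) [DecidableEq α] (t : ℕ) :
    Matrix (Fin t → α) (Fin t → α) ℂ :=
  (t.factorial : ℂ)⁻¹ • ∑ σ : Equiv.Perm (Fin t), permOp α σ

/-- Single-qubit Pauli matrices labelled by `𝔽₂²`:
`σ_{(0,0)} = I`, `σ_{(0,1)} = X`, `σ_{(1,0)} = Z`, `σ_{(1,1)} = Y`. -/
def pauli (a : ZMod 2 × ZMod 2) : Matrix (ZMod 2) (ZMod 2) ℂ :=
  Matrix.of fun x y =>
    if a = (0, 0) then (if x = y then 1 else 0)
    else if a = (0, 1) then (if x = y + 1 then 1 else 0)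
    else if a = (1, 0) then (if x = y then (if x = 0 then 1 else -1) else 0)
    else (if x = y + 1 then (if x = 0 then -Complex.I else Complex.I) else 0)

/-- The Pauli operator `W_a`, `a ∈ 𝔽₂^{2n}`, on qubits labelled by a finite type `Q`. -/
def PauliW {Q : Type*} [Fintype Q] (a : Q → ZMod 2 × ZMod 2) :
    Matrix (Q → ZMod 2) (Q → ZMod 2) ℂ :=
  Matrix.of fun x y => ∏ i, pauli (a i) (x i) (y i)

/-- The stabilizer projector `P_{n,k} = 2^{-2n}·Σ_{a∈𝔽₂^{2n}} W_a^{⊗k}`. -/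
def stabProj (n k : ℕ) :
    Matrix (Fin k → (Fin n → ZMod 2)) (Fin k → (Fin n → ZMod 2)) ℂ :=
  ((2 : ℂ) ^ (2 * n))⁻¹ • ∑ a : Fin n → ZMod 2 × ZMod 2, tpow (PauliW a) k

/-- A single-qubit gate `G` applied to qubit `i` of `n` qubits (identity elsewhere). -/
def embedGate (n : ℕ) (G : Matrix (ZMod 2) (ZMod 2) ℂ) (i : Fin n) :
    Matrix (Fin n → ZMod 2) (Fin n → ZMod 2) ℂ :=
  Matrix.of fun x y =>
    G (x i) (y i) * ∏ k ∈ Finset.univ.erase i, (if x k = y k then (1 : ℂ) else 0)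

/-- The Hadamard gate `((1+i)/2)·[[1,1],[1,−1]]`. -/
def hGate : Matrix (ZMod 2) (ZMod 2) ℂ :=
  Matrix.of fun x y => (1 + Complex.I) / 2 * (if x = 1 ∧ y = 1 then -1 else 1)

/-- The phase gate `diag(1, −i)`. -/
def sGate : Matrix (ZMod 2) (ZMod 2) ℂ :=
  Matrix.of fun x y => if x = y then (if x = 0 then 1 else -Complex.I) else 0

/-- The CNOT gate with control qubit `i` and target qubit `j`. -/
def cnotGate (n : ℕ) (i j : Fin n) :
    Matrix (Fin n → ZMod 2) (Fin n → ZMod 2) ℂ :=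
  Matrix.of fun x y =>
    if x i = y i ∧ x j = y i + y j ∧ ∀ k, k ≠ i → k ≠ j → x k = y k then 1 else 0

/-- Generators of the `n`-qubit Clifford group: Hadamard and phase gates on each qubit,
CNOT gates on each ordered pair of distinct qubits. -/
def cliffordGens (n : ℕ) : Set (Matrix (Fin n → ZMod 2) (Fin n → ZMod 2) ℂ) :=
  (⋃ i : Fin n, {embedGate n hGate i}) ∪ (⋃ i : Fin n, {embedGate n sGate i}) ∪
    ⋃ (i : Fin n) (j : Fin n) (_ : i ≠ j), {cnotGate n i j}

/-- The `n`-qubit Clifford group: the subgroup of the unitary group `U(2^n)` generated by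
the Hadamard and phase gates on each qubit together with the CNOT gates. -/
def CliffordGroup (n : ℕ) : Subgroup (Matrix.unitaryGroup (Fin n → ZMod 2) ℂ) :=
  Subgroup.closure
    {U : Matrix.unitaryGroup (Fin n → ZMod 2) ℂ |
      (U : Matrix (Fin n → ZMod 2) (Fin n → ZMod 2) ℂ) ∈ cliffordGens n}

open Matrix ComplexConjugate

section PiKron

variable {ι R : Type*} [Fintype ι] {κ : ι → Type*} [CommSemiring R]

def piKron (M : ∀ i, Matrix (κ i) (κ i) R) : Matrix (∀ i, κ i) (∀ i, κ i) R :=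
  of fun x y => ∏ i, M i (x i) (y i)

theorem piKron_mul [DecidableEq ι] [∀ i, Fintype (κ i)] (M N : ∀ i, Matrix (κ i) (κ i) R) :
    piKron M * piKron N = piKron fun i => M i * N i := by
  ext x z
  simp only [piKron, mul_apply, of_apply, Fintype.prod_sum, ← Finset.prod_mul_distrib]

theorem trace_piKron [DecidableEq ι] [∀ i, Fintype (κ i)] (M : ∀ i, Matrix (κ i) (κ i) R) :
    trace (piKron M) = ∏ i, trace (M i) := by
  simp only [trace, diag, piKron, of_apply, Fintype.prod_sum]

theorem piKron_one [∀ i, DecidableEq (κ i)] :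
    piKron (fun i => (1 : Matrix (κ i) (κ i) R)) = 1 := by
  ext x y
  simp only [piKron, of_apply, one_apply, Fintype.prod_boole, funext_iff]

theorem conjTranspose_piKron [StarRing R] (M : ∀ i, Matrix (κ i) (κ i) R) :
    (piKron M)ᴴ = piKron fun i => (M i)ᴴ := by
  ext x y
  simp [piKron, conjTranspose_apply]

end PiKron

theorem tpow_eq_piKron {α : Type*} [Fintype α] (M : Matrix α α ℂ) (t : ℕ) :
    tpow M t = piKron fun _ => M := rfl

theorem trace_tpow_mul_tpow {α : Type*} [Fintype α] (M N : Matrix α α ℂ) (t : ℕ) :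
    trace (tpow M t * tpow N t) = trace (M * N) ^ t := by
  rw [tpow_eq_piKron, tpow_eq_piKron, piKron_mul, trace_piKron, Finset.prod_const,
    Finset.card_univ, Fintype.card_fin]

theorem trace_mul_rankOne {α : Type*} [Fintype α] (A : Matrix α α ℂ) (ψ : α → ℂ) :
    trace (A * rankOne ψ) = star ψ ⬝ᵥ (A *ᵥ ψ) := by
  simp only [trace, diag, mul_apply, rankOne, of_apply, dotProduct, mulVec, Finset.mul_sum,
    Pi.star_apply, starRingEnd_apply]
  exact Finset.sum_congr rfl fun x _ => Finset.sum_congr rfl fun y _ => by ring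

theorem sum_sum_norm_rankOne_sq {α : Type*} [Fintype α] (ψ : α → ℂ) :
    ∑ x, ∑ y, ‖rankOne ψ x y‖ ^ 2 = (∑ x, ‖ψ x‖ ^ 2) ^ 2 := by
  simp only [rankOne, of_apply, norm_mul, Complex.norm_conj, mul_pow, sq (∑ x, _),
    Finset.sum_mul_sum]

section UnitVector

variable {ι : Type*} [Fintype ι] {ψ : ι → ℂ}

theorem sum_norm_sq_eq_one (hψ : star ψ ⬝ᵥ ψ = 1) : ∑ i, ‖ψ i‖ ^ 2 = 1 := by
  apply Complex.ofReal_injective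
  push_cast
  simp only [← Complex.conj_mul']
  exact hψ

theorem norm_toLp_eq_one (hψ : star ψ ⬝ᵥ ψ = 1) :
    ‖(WithLp.toLp 2 ψ : EuclideanSpace ℂ ι)‖ = 1 := by
  rw [← pow_eq_one_iff_of_nonneg (norm_nonneg _) two_ne_zero, EuclideanSpace.norm_sq_eq]
  exact sum_norm_sq_eq_one hψ

theorem norm_star_dotProduct_le_one {φ : ι → ℂ} (hψ : star ψ ⬝ᵥ ψ = 1)
    (hφ : star φ ⬝ᵥ φ = 1) : ‖star ψ ⬝ᵥ φ‖ ≤ 1 := by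
  have h := norm_inner_le_norm (𝕜 := ℂ) (WithLp.toLp 2 ψ : EuclideanSpace ℂ ι) (WithLp.toLp 2 φ)
  rwa [EuclideanSpace.inner_toLp_toLp, dotProduct_comm, norm_toLp_eq_one hψ,
    norm_toLp_eq_one hφ, one_mul] at h

theorem star_mulVec_dotProduct_mulVec_of_mem_unitaryGroup [DecidableEq ι] {U : Matrix ι ι ℂ}
    (hU : U ∈ unitaryGroup ι ℂ) : star (U *ᵥ ψ) ⬝ᵥ (U *ᵥ ψ) = star ψ ⬝ᵥ ψ := by
  rw [star_mulVec, dotProduct_mulVec, vecMul_vecMul, ← star_eq_conjTranspose,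
    mem_unitaryGroup_iff'.mp hU, vecMul_one]

end UnitVector

theorem ZMod.forall_two {p : ZMod 2 → Prop} : (∀ x, p x) ↔ p 0 ∧ p 1 := by
  refine ⟨fun h => ⟨h 0, h 1⟩, fun h x => ?_⟩
  fin_cases x
  exacts [h.1, h.2]

theorem ZMod.sum_univ_two {M : Type*} [AddCommMonoid M] (f : ZMod 2 → M) :
    ∑ x, f x = f 0 + f 1 :=
  Fin.sum_univ_two f

theorem pauli_zero : pauli 0 = 1 := by
  ext x y
  simp [pauli, one_apply, ← Prod.mk_zero_zero]

theorem pauli_mem_unitaryGroup (a : ZMod 2 × ZMod 2) : pauli a ∈ unitaryGroup (ZMod 2) ℂ := by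
  rw [mem_unitaryGroup_iff']
  obtain ⟨a₁, a₂⟩ := a
  revert a₁ a₂
  simp only [ZMod.forall_two, ← Matrix.ext_iff]
  simp +decide [pauli, mul_apply, one_apply, star_eq_conjTranspose]

theorem sum_pauli_mul_conj (x y x' y' : ZMod 2) :
    ∑ a, pauli a x y * conj (pauli a x' y') = if x = x' ∧ y = y' then 2 else 0 := by
  revert x y x' y'
  simp only [ZMod.forall_two]
  simp +decide [pauli, Fintype.sum_prod_type, ZMod.sum_univ_two]
  norm_num

theorem sum_norm_trace_mul_sq_of_sum_mul_conj {A ι : Type*} [Fintype A] [Fintype ι]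
    [DecidableEq ι] (W : A → Matrix ι ι ℂ) (c : ℝ)
    (hW : ∀ x y x' y', ∑ a, W a x y * conj (W a x' y') = if x = x' ∧ y = y' then (c : ℂ) else 0)
    (M : Matrix ι ι ℂ) :
    ∑ a, ‖trace (W a * M)‖ ^ 2 = c * ∑ x, ∑ y, ‖M x y‖ ^ 2 := by
  have htr (a : A) : trace (W a * M) = ∑ p : ι × ι, W a p.1 p.2 * M p.2 p.1 := by
    rw [trace, Fintype.sum_prod_type]
    rfl
  apply Complex.ofReal_injective
  push_cast
  calc ∑ a, (‖trace (W a * M)‖ : ℂ) ^ 2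
      = ∑ a, ∑ p : ι × ι, ∑ q : ι × ι,
          (W a p.1 p.2 * conj (W a q.1 q.2)) * (M p.2 p.1 * conj (M q.2 q.1)) := by
        simp only [← Complex.mul_conj', htr, map_sum, map_mul, Finset.sum_mul_sum]
        exact Finset.sum_congr rfl fun a _ => Finset.sum_congr rfl fun p _ =>
          Finset.sum_congr rfl fun q _ => by ring
    _ = ∑ p : ι × ι, ∑ q : ι × ι,
          (∑ a, W a p.1 p.2 * conj (W a q.1 q.2)) * (M p.2 p.1 * conj (M q.2 q.1)) := by
        rw [Finset.sum_comm]
        simp only [Finset.sum_mul]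
        exact Finset.sum_congr rfl fun p _ => Finset.sum_comm
    _ = c * ∑ p : ι × ι, (‖M p.2 p.1‖ : ℂ) ^ 2 := by
        simp only [hW, ← Prod.ext_iff, ite_mul, zero_mul, Finset.sum_ite_eq, Finset.mem_univ,
          if_true, Complex.mul_conj', Finset.mul_sum]
    _ = c * ∑ x, ∑ y, (‖M x y‖ : ℂ) ^ 2 := by
        rw [Fintype.sum_prod_type_right]

section Pauli

variable {Q : Type*} [Fintype Q]

theorem pauliW_eq_piKron (a : Q → ZMod 2 × ZMod 2) : PauliW a = piKron fun i => pauli (a i) :=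
  rfl

theorem pauliW_zero : PauliW (0 : Q → ZMod 2 × ZMod 2) = 1 := by
  simp only [pauliW_eq_piKron, Pi.zero_apply, pauli_zero, piKron_one]

theorem pauliW_mem_unitaryGroup [DecidableEq Q] (a : Q → ZMod 2 × ZMod 2) :
    PauliW a ∈ unitaryGroup (Q → ZMod 2) ℂ := by
  rw [mem_unitaryGroup_iff', star_eq_conjTranspose, pauliW_eq_piKron, conjTranspose_piKron,
    piKron_mul]
  simp only [← star_eq_conjTranspose, mem_unitaryGroup_iff'.mp (pauli_mem_unitaryGroup _),
    piKron_one]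

theorem sum_pauliW_mul_conj [DecidableEq Q] (x y x' y' : Q → ZMod 2) :
    ∑ a : Q → ZMod 2 × ZMod 2, PauliW a x y * conj (PauliW a x' y') =
      if x = x' ∧ y = y' then 2 ^ Fintype.card Q else 0 := by
  simp only [PauliW, of_apply, map_prod, ← Finset.prod_mul_distrib]
  rw [← Fintype.prod_sum fun i b => pauli b (x i) (y i) * conj (pauli b (x' i) (y' i))]
  simp only [sum_pauli_mul_conj, Fintype.prod_ite_zero, Finset.prod_const, Finset.card_univ,
    funext_iff, forall_and]

end Pauli

theorem trace_stabProj_mul_tpow (n k : ℕ) (M : Matrix (Fin n → ZMod 2) (Fin n → ZMod 2) ℂ) :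
    trace (stabProj n k * tpow M k) =
      ((2 : ℂ) ^ (2 * n))⁻¹ * ∑ a : Fin n → ZMod 2 × ZMod 2, trace (PauliW a * M) ^ k := by
  simp only [stabProj, smul_mul, trace_smul, Finset.sum_mul, trace_sum, trace_tpow_mul_tpow,
    smul_eq_mul]

theorem sum_pow_four_le_sum_sq {ι : Type*} [Fintype ι] (r : ι → ℝ) (hr : ∀ i, r i ^ 2 ≤ 1) :
    ∑ i, r i ^ 4 ≤ ∑ i, r i ^ 2 :=
  Finset.sum_le_sum fun i _ => by nlinarith [hr i, sq_nonneg (r i)]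

theorem two_mul_div_le_sum_pow_four {ι : Type*} [Fintype ι] (r : ι → ℝ) (i₀ : ι) (hr₀ : r i₀ = 1)
    {D : ℝ} (hcard : (Fintype.card ι : ℝ) = D ^ 2) (hsum : ∑ i, r i ^ 2 = D) :
    2 * D / (D + 1) ≤ ∑ i, r i ^ 4 := by
  classical
  set s := Finset.univ.erase i₀
  have hsplit (f : ℝ → ℝ) : ∑ i, f (r i) = ∑ i ∈ s, f (r i) + f 1 := by
    rw [← Finset.sum_erase_add _ _ (Finset.mem_univ i₀), hr₀]
  have hs : ∑ i ∈ s, r i ^ 2 = D - 1 := by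
    linarith [hsplit (· ^ 2)]
  have hD : 1 ≤ D := by
    have : 0 ≤ ∑ i ∈ s, r i ^ 2 := by positivity
    linarith
  have hcs : (D - 1) ^ 2 ≤ (D ^ 2 - 1) * ∑ i ∈ s, r i ^ 4 := by
    have h := sq_sum_le_card_mul_sum_sq (s := s) (f := fun i => r i ^ 2)
    rw [Finset.card_erase_of_mem (Finset.mem_univ _), Finset.card_univ,
      Nat.cast_sub (Fintype.card_pos_iff.mpr ⟨i₀⟩), hcard] at h
    simpa [hs, ← pow_mul] using h
  have hT : 0 ≤ ∑ i ∈ s, r i ^ 4 := by positivity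
  rw [hsplit (· ^ 4), div_le_iff₀ (by linarith)]
  nlinarith [mul_nonneg (by linarith : (0 : ℝ) ≤ D + 1) hT]

theorem stmt11 (n : ℕ) (ψ : (Fin n → ZMod 2) → ℂ)
    (hψ : ∑ x, (starRingEnd ℂ) (ψ x) * ψ x = 1) :
    2 * (2 : ℝ) ^ n / ((2 : ℝ) ^ n + 1) ≤
        (∑ a : Fin n → ZMod 2 × ZMod 2,
          ‖∑ x, (starRingEnd ℂ) (ψ x) * Matrix.mulVec (PauliW a) ψ x‖ ^ 4) ∧
      (∑ a : Fin n → ZMod 2 × ZMod 2,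
          ‖∑ x, (starRingEnd ℂ) (ψ x) * Matrix.mulVec (PauliW a) ψ x‖ ^ 4)
        ≤ (2 : ℝ) ^ n ∧
      Matrix.trace (stabProj n 4 * tpow (rankOne ψ) 4)
        = (((2 : ℂ) ^ n) ^ 2)⁻¹ *
            ∑ a : Fin n → ZMod 2 × ZMod 2,
              (∑ x, (starRingEnd ℂ) (ψ x) * Matrix.mulVec (PauliW a) ψ x) ^ 4 := by
  have hexp (a : Fin n → ZMod 2 × ZMod 2) :
      ∑ x, conj (ψ x) * (PauliW a *ᵥ ψ) x = trace (PauliW a * rankOne ψ) :=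
    (trace_mul_rankOne _ _).symm
  have hsq : ∑ a : Fin n → ZMod 2 × ZMod 2, ‖trace (PauliW a * rankOne ψ)‖ ^ 2 = 2 ^ n := by
    rw [sum_norm_trace_mul_sq_of_sum_mul_conj (PauliW (Q := Fin n)) (2 ^ n)
        (by simpa using sum_pauliW_mul_conj (Q := Fin n)), sum_sum_norm_rankOne_sq, sum_norm_sq_eq_one hψ, one_pow, mul_one]
  have hle (a : Fin n → ZMod 2 × ZMod 2) : ‖trace (PauliW a * rankOne ψ)‖ ^ 2 ≤ 1 := by
    rw [trace_mul_rankOne]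
    exact pow_le_one₀ (norm_nonneg _) (norm_star_dotProduct_le_one hψ
      ((star_mulVec_dotProduct_mulVec_of_mem_unitaryGroup (pauliW_mem_unitaryGroup a)).trans hψ))
  simp only [hexp]
  refine ⟨two_mul_div_le_sum_pow_four _ 0 ?_ ?_ hsq,
    (sum_pow_four_le_sum_sq _ hle).trans hsq.le, ?_⟩
  · rw [pauliW_zero, trace_mul_rankOne, one_mulVec]
    exact (congrArg norm hψ).trans norm_one
  · simp only [Fintype.card_fun, Fintype.card_prod, ZMod.card, Fintype.card_fin]
    push_cast
    rw [pow_right_comm]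
    norm_num
  · rw [trace_stabProj_mul_tpow, ← pow_mul, mul_comm n]
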